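/- arXiv:2201.02037 — 2 statements merged into one kernel-verified Lean document; each statement's English description precedes it below -/
import Mathlib

section
/- Let f* be a maximum flow in a flow network, and let S_c be the set of the source s together with all vertices reachable from s by a path augmenting for f*. Then for every min-cut S, S_c ⊆ S. Consequently S_c is the unique smallest min-cut with respect to set inclusion. -/
open Finset
open scoped ENNReal

/-- A flow network: a capacity function on ordered pairs of vertices
(capacity `0` meaning "no edge", `⊤` meaning infinite capacity),
together with a source `s` and a sink `t`. -/
structure FlowNetwork (V : Type) where
  cap : V → V → ℝ≥0∞
  s : V
  t : V

variable {V : Type} [Fintype V] [DecidableEq V]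

/-- `f` is a flow: nonnegative, below capacity, conservation away from `s`, `t`. -/
def IsFlow (N : FlowNetwork V) (f : V → V → ℝ) : Prop :=
  (∀ u v, 0 ≤ f u v) ∧
  (∀ u v, ENNReal.ofReal (f u v) ≤ N.cap u v) ∧
  (∀ w, w ≠ N.s → w ≠ N.t → ∑ u, f u w = ∑ u, f w u)

/-- The total (net) flow into the sink. -/
def netFlow (N : FlowNetwork V) (f : V → V → ℝ) : ℝ :=
  ∑ u, f u N.t - ∑ u, f N.t u

/-- A max-flow: a flow of maximal total flow. -/
def IsMaxFlow (N : FlowNetwork V) (f : V → V → ℝ) : Prop :=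
  IsFlow N f ∧ ∀ g, IsFlow N g → netFlow N g ≤ netFlow N f

/-- One step of an augmenting path for `f`: either a forward edge with
residual capacity, or a backward edge carrying positive flow. -/
def AugStep (N : FlowNetwork V) (f : V → V → ℝ) (u v : V) : Prop :=
  ENNReal.ofReal (f u v) < N.cap u v ∨ 0 < f v u

/-- A cut: a set of vertices containing the source but not the sink. -/
def IsCut (N : FlowNetwork V) (S : Finset V) : Prop :=
  N.s ∈ S ∧ N.t ∉ S

/-- The capacity of a cut: sum of capacities of edges leaving it. -/
noncomputable def cutCap (N : FlowNetwork V) (S : Finset V) : ℝ≥0∞ :=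
  ∑ u ∈ S, ∑ v ∈ Sᶜ, N.cap u v

/-- A min-cut: a cut of minimum capacity. -/
def IsMinCut (N : FlowNetwork V) (S : Finset V) : Prop :=
  IsCut N S ∧ ∀ T, IsCut N T → cutCap N S ≤ cutCap N T

open scoped Classical in
/-- The set `S_c` of the source together with all vertices reachable from
the source by paths augmenting for `f`. -/
noncomputable def reachCut (N : FlowNetwork V) (f : V → V → ℝ) : Finset V :=
  Finset.univ.filter (fun W => Relation.ReflTransGen (AugStep N f) N.s W)

/-!
An augmenting path from `s` to `t` yields a direction `d` (a unit of flow on each forward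
edge, minus a unit on each backward edge) whose net inflow is `1` at `t`, `-1` at `s` and `0`
elsewhere; `f + ε • d` is still a flow for small `ε > 0`, so a max-flow has no such path and
`S_c` is a cut. By weak duality a cut `S` has capacity equal to the value of `f` exactly when
no augmenting step leaves `S`, i.e. when the edges leaving `S` are saturated and those entering
`S` carry no flow. `S_c` is closed under augmenting steps, hence a min-cut; conversely every
min-cut is closed under augmenting steps, hence contains `S_c`.
-/

open Filter Topology

section FlowOut

variable {ι M : Type*} [Fintype ι] [DecidableEq ι]

def flowOut [AddCommMonoid M] (g : ι → ι → M) (S : Finset ι) : M :=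
  ∑ u ∈ S, ∑ v ∈ Sᶜ, g u v

lemma flowOut_mono [AddCommMonoid M] [PartialOrder M] [IsOrderedAddMonoid M]
    {g h : ι → ι → M} {S : Finset ι} (hgh : ∀ u ∈ S, ∀ v ∉ S, g u v ≤ h u v) :
    flowOut g S ≤ flowOut h S :=
  Finset.sum_le_sum fun u hu => Finset.sum_le_sum fun v hv => hgh u hu v (mem_compl.1 hv)

lemma flowOut_lt_flowOut [AddCommMonoid M] [PartialOrder M] [IsOrderedCancelAddMonoid M]
    {g h : ι → ι → M} {S : Finset ι} {u v : ι} (hgh : ∀ u ∈ S, ∀ v ∉ S, g u v ≤ h u v)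
    (hu : u ∈ S) (hv : v ∉ S) (hlt : g u v < h u v) :
    flowOut g S < flowOut h S :=
  Finset.sum_lt_sum (fun a ha => Finset.sum_le_sum fun b hb => hgh a ha b (mem_compl.1 hb))
    ⟨u, hu, Finset.sum_lt_sum (fun b hb => hgh u hu b (mem_compl.1 hb))
      ⟨v, mem_compl.2 hv, hlt⟩⟩

lemma flowOut_nonneg {g : ι → ι → ℝ} (hg : ∀ u v, 0 ≤ g u v) (S : Finset ι) :
    0 ≤ flowOut g S :=
  Finset.sum_nonneg fun u _ => Finset.sum_nonneg fun v _ => hg u v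

lemma ofReal_flowOut {g : ι → ι → ℝ} (hg : ∀ u v, 0 ≤ g u v) (S : Finset ι) :
    ENNReal.ofReal (flowOut g S) = flowOut (fun u v => ENNReal.ofReal (g u v)) S := by
  simp only [flowOut]
  rw [ENNReal.ofReal_sum_of_nonneg fun u _ => Finset.sum_nonneg fun v _ => hg u v]
  exact Finset.sum_congr rfl fun u _ => ENNReal.ofReal_sum_of_nonneg fun v _ => hg u v

lemma ne_top_of_flowOut_ne_top {g : ι → ι → ℝ≥0∞} {S : Finset ι} (hg : flowOut g S ≠ ⊤) :
    ∀ u ∈ S, ∀ v ∉ S, g u v ≠ ⊤ := by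
  simp only [flowOut, ne_eq, ENNReal.sum_eq_top, not_exists, not_and, mem_compl] at hg
  exact hg

lemma toReal_flowOut {g : ι → ι → ℝ≥0∞} {S : Finset ι} (hg : ∀ u ∈ S, ∀ v ∉ S, g u v ≠ ⊤) :
    (flowOut g S).toReal = flowOut (fun u v => (g u v).toReal) S := by
  rw [flowOut, ENNReal.toReal_sum fun u hu => ENNReal.sum_ne_top.2 fun v hv =>
    hg u hu v (mem_compl.1 hv)]
  exact Finset.sum_congr rfl fun u hu => ENNReal.toReal_sum fun v hv => hg u hu v (mem_compl.1 hv)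

end FlowOut

lemma Pi.single_single_apply {ι M : Type*} [DecidableEq ι] [Zero M] (u v : ι) (x : M)
    (a b : ι) : (Pi.single u (Pi.single v x) : ι → ι → M) a b = if a = u ∧ b = v then x else 0 := by
  rcases eq_or_ne a u with rfl | ha <;> simp [Pi.single_apply, *]

section Excess

variable {ι M : Type*} [Fintype ι] [AddCommGroup M]

def excess (g : ι → ι → M) (w : ι) : M :=
  ∑ u, g u w - ∑ u, g w u

@[simp]
lemma excess_zero : excess (0 : ι → ι → M) = 0 := by
  funext w
  simp [excess]

lemma excess_add (g h : ι → ι → M) : excess (g + h) = excess g + excess h := by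
  funext w
  simp only [excess, Pi.add_apply, Finset.sum_add_distrib]
  abel

lemma excess_smul {R : Type*} [Monoid R] [DistribMulAction R M] (c : R) (g : ι → ι → M) :
    excess (c • g) = c • excess g := by
  funext w
  simp only [excess, Pi.smul_apply, ← Finset.smul_sum, smul_sub]

lemma excess_single [DecidableEq ι] (u v : ι) (x : M) :
    excess (Pi.single u (Pi.single v x)) = Pi.single v x - Pi.single u x := by
  funext w
  simp [excess, Pi.single_single_apply, Pi.single_apply, ite_and, Finset.sum_ite_eq']

lemma sum_excess [DecidableEq ι] (g : ι → ι → M) (A : Finset ι) :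
    ∑ w ∈ A, excess g w = flowOut g Aᶜ - flowOut g A := by
  have hsplit (w : ι) : excess g w =
      (∑ u ∈ A, g u w + ∑ u ∈ Aᶜ, g u w) - (∑ u ∈ A, g w u + ∑ u ∈ Aᶜ, g w u) := by
    rw [excess, Finset.sum_add_sum_compl, Finset.sum_add_sum_compl]
  simp only [hsplit, Finset.sum_sub_distrib, Finset.sum_add_distrib, flowOut, compl_compl]
  rw [Finset.sum_comm (s := A) (t := A), Finset.sum_comm (s := A) (t := Aᶜ)]
  abel

end Excess

lemma eventually_nonneg_and_ofReal_add_mul_le {a x : ℝ} {c : ℝ≥0∞} (ha : 0 ≤ a)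
    (hac : ENNReal.ofReal a ≤ c) (hpos : 0 < x → ENNReal.ofReal a < c) (hneg : x < 0 → 0 < a) :
    ∀ᶠ ε in 𝓝[>] 0, 0 ≤ a + ε * x ∧ ENNReal.ofReal (a + ε * x) ≤ c := by
  have hlim : Tendsto (fun ε => a + ε * x) (𝓝[>] 0) (𝓝 a) := by
    refine tendsto_nhdsWithin_of_tendsto_nhds ?_
    exact (by fun_prop : Continuous fun ε : ℝ => a + ε * x).tendsto' 0 a (by simp)
  rcases lt_trichotomy x 0 with hx | rfl | hx
  · filter_upwards [hlim.eventually (lt_mem_nhds (hneg hx)), self_mem_nhdsWithin] with ε hε hε0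
    have : ε * x < 0 := mul_neg_of_pos_of_neg hε0 hx
    exact ⟨hε.le, (ENNReal.ofReal_le_ofReal (by linarith)).trans hac⟩
  · simp [ha, hac]
  · have hlim' := (ENNReal.continuous_ofReal.tendsto a).comp hlim
    filter_upwards [hlim'.eventually (gt_mem_nhds (hpos hx)), self_mem_nhdsWithin] with ε hε hε0
    exact ⟨by have : 0 < ε * x := mul_pos hε0 hx; linarith, hε.le⟩

section Network

variable {X : Type}

def IsAugmentingDirection (N : FlowNetwork X) (f d : X → X → ℝ) : Prop :=
  ∀ u v, (0 < d u v → ENNReal.ofReal (f u v) < N.cap u v) ∧ (d u v < 0 → 0 < f u v)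

variable {N : FlowNetwork X} {f : X → X → ℝ}

lemma IsFlow.excess_eq_zero [Fintype X] (hf : IsFlow N f) {w : X} (hs : w ≠ N.s)
    (ht : w ≠ N.t) : excess f w = 0 :=
  sub_eq_zero.2 (hf.2.2 w hs ht)

lemma netFlow_eq_excess [Fintype X] : netFlow N f = excess f N.t := rfl

lemma isFlow_zero [Fintype X] : IsFlow N 0 :=
  ⟨fun _ _ => le_rfl, fun _ _ => by simp, fun _ _ _ => rfl⟩

lemma IsMaxFlow.netFlow_nonneg [Fintype X] (hf : IsMaxFlow N f) : 0 ≤ netFlow N f := by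
  simpa [netFlow] using hf.2 0 isFlow_zero

namespace IsAugmentingDirection

variable {d e : X → X → ℝ}

lemma zero : IsAugmentingDirection N f 0 :=
  fun _ _ => ⟨fun h => h.false.elim, fun h => h.false.elim⟩

lemma add (hd : IsAugmentingDirection N f d) (he : IsAugmentingDirection N f e) :
    IsAugmentingDirection N f (d + e) := by
  intro u v
  constructor
  · intro h
    rcases lt_or_ge 0 (d u v) with hd' | hd'
    · exact (hd u v).1 hd'
    · exact (he u v).1 (by simp only [Pi.add_apply] at h; linarith)
  · intro h
    rcases lt_or_ge (d u v) 0 with hd' | hd'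
    · exact (hd u v).2 hd'
    · exact (he u v).2 (by simp only [Pi.add_apply] at h; linarith)

lemma exists_isFlow_add_smul [Fintype X] (hf : IsFlow N f) (hd : IsAugmentingDirection N f d)
    (hcons : ∀ w, w ≠ N.s → w ≠ N.t → excess d w = 0) :
    ∃ ε : ℝ, 0 < ε ∧ IsFlow N (f + ε • d) := by
  have hedge : ∀ᶠ ε in 𝓝[>] (0 : ℝ), ∀ u v,
      0 ≤ f u v + ε * d u v ∧ ENNReal.ofReal (f u v + ε * d u v) ≤ N.cap u v :=
    eventually_all.2 fun u => eventually_all.2 fun v =>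
      eventually_nonneg_and_ofReal_add_mul_le (hf.1 u v) (hf.2.1 u v) (hd u v).1 (hd u v).2
  obtain ⟨ε, hε, hε0⟩ := (hedge.and self_mem_nhdsWithin).exists
  refine ⟨ε, hε0, fun u v => (hε u v).1, fun u v => (hε u v).2, fun w hws hwt => ?_⟩
  refine sub_eq_zero.1 (?_ : excess (f + ε • d) w = 0)
  rw [excess_add, excess_smul, Pi.add_apply, Pi.smul_apply, hcons w hws hwt, smul_zero,
    add_zero, hf.excess_eq_zero hws hwt]

end IsAugmentingDirection

lemma exists_isAugmentingDirection_of_augStep [Fintype X] [DecidableEq X] {u v : X}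
    (h : AugStep N f u v) :
    ∃ d, IsAugmentingDirection N f d ∧ excess d = Pi.single v 1 - Pi.single u 1 := by
  rcases h with hfwd | hbwd
  · refine ⟨Pi.single u (Pi.single v 1), fun a b => ?_, excess_single u v 1⟩
    by_cases hab : a = u ∧ b = v
    · obtain ⟨rfl, rfl⟩ := hab
      simp [hfwd]
    · simp [Pi.single_single_apply, hab]
  · refine ⟨Pi.single v (Pi.single u (-1)), fun a b => ?_, ?_⟩
    · by_cases hab : a = v ∧ b = u
      · obtain ⟨rfl, rfl⟩ := hab
        simp [hbwd]
      · simp [Pi.single_single_apply, hab]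
    · rw [excess_single, Pi.single_neg, Pi.single_neg]
      abel

lemma exists_isAugmentingDirection_of_reflTransGen [Fintype X] [DecidableEq X] {a b : X}
    (h : Relation.ReflTransGen (AugStep N f) a b) :
    ∃ d, IsAugmentingDirection N f d ∧ excess d = Pi.single b 1 - Pi.single a 1 := by
  induction h with
  | refl => exact ⟨0, .zero, by simp⟩
  | tail _ hstep ih =>
    obtain ⟨d, hd, hdex⟩ := ih
    obtain ⟨e, he, heex⟩ := exists_isAugmentingDirection_of_augStep hstep
    exact ⟨d + e, hd.add he, by rw [excess_add, hdex, heex]; abel⟩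

lemma IsMaxFlow.not_reflTransGen_augStep [Fintype X] [DecidableEq X] (hf : IsMaxFlow N f)
    (hst : N.s ≠ N.t) : ¬ Relation.ReflTransGen (AugStep N f) N.s N.t := by
  intro hpath
  obtain ⟨d, hd, hdex⟩ := exists_isAugmentingDirection_of_reflTransGen hpath
  have hexc := congrFun hdex
  obtain ⟨ε, hε, hg⟩ := hd.exists_isFlow_add_smul hf.1 fun w hws hwt => by simp [hexc, hws, hwt]
  have hnet : netFlow N (f + ε • d) = netFlow N f + ε := by
    simp [netFlow_eq_excess, excess_add, excess_smul, hexc, hst.symm]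
  linarith [hf.2 _ hg]

lemma IsFlow.netFlow_eq_flowOut_sub [Fintype X] [DecidableEq X] (hf : IsFlow N f)
    {S : Finset X} (hS : IsCut N S) : netFlow N f = flowOut f S - flowOut f Sᶜ := by
  have hsum := sum_excess f Sᶜ
  rw [compl_compl] at hsum
  rw [← hsum, netFlow_eq_excess]
  refine (Finset.sum_eq_single_of_mem N.t (mem_compl.2 hS.2) fun w hw hwt => ?_).symm
  exact hf.excess_eq_zero (fun h => mem_compl.1 hw (h ▸ hS.1)) hwt

lemma IsFlow.ofReal_netFlow_le_cutCap [Fintype X] [DecidableEq X] (hf : IsFlow N f)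
    {S : Finset X} (hS : IsCut N S) : ENNReal.ofReal (netFlow N f) ≤ cutCap N S :=
  calc ENNReal.ofReal (netFlow N f) ≤ ENNReal.ofReal (flowOut f S) := by
        rw [hf.netFlow_eq_flowOut_sub hS]
        exact ENNReal.ofReal_le_ofReal (sub_le_self _ (flowOut_nonneg hf.1 _))
    _ = flowOut (fun u v => ENNReal.ofReal (f u v)) S := ofReal_flowOut hf.1 S
    _ ≤ cutCap N S := flowOut_mono fun u _ v _ => hf.2.1 u v

lemma not_augStep_iff {u v : X} :
    ¬ AugStep N f u v ↔ N.cap u v ≤ ENNReal.ofReal (f u v) ∧ f v u ≤ 0 := by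
  simp only [AugStep, not_or, not_lt]

lemma IsFlow.cutCap_eq_ofReal_netFlow [Fintype X] [DecidableEq X] (hf : IsFlow N f)
    {S : Finset X} (hS : IsCut N S) (hclosed : ∀ u ∈ S, ∀ v ∉ S, ¬ AugStep N f u v) :
    cutCap N S = ENNReal.ofReal (netFlow N f) := by
  have hin : flowOut f Sᶜ = 0 :=
    Finset.sum_eq_zero fun u hu => Finset.sum_eq_zero fun v hv =>
      le_antisymm (not_augStep_iff.1 (hclosed v (by simpa using hv) u (mem_compl.1 hu))).2
        (hf.1 u v)
  calc cutCap N S = flowOut (fun u v => ENNReal.ofReal (f u v)) S :=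
        Finset.sum_congr rfl fun u hu => Finset.sum_congr rfl fun v hv =>
          le_antisymm (not_augStep_iff.1 (hclosed u hu v (mem_compl.1 hv))).1 (hf.2.1 u v)
    _ = ENNReal.ofReal (netFlow N f) := by
        rw [← ofReal_flowOut hf.1, hf.netFlow_eq_flowOut_sub hS, hin, sub_zero]

lemma IsFlow.not_augStep_of_cutCap_le [Fintype X] [DecidableEq X] (hf : IsFlow N f)
    {S : Finset X} (hS : IsCut N S) (hnet : 0 ≤ netFlow N f)
    (hcap : cutCap N S ≤ ENNReal.ofReal (netFlow N f)) :
    ∀ u ∈ S, ∀ v ∉ S, ¬ AugStep N f u v := by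
  have hfin := ne_top_of_flowOut_ne_top (ne_top_of_le_ne_top ENNReal.ofReal_ne_top hcap)
  have hfc : ∀ u ∈ S, ∀ v ∉ S, f u v ≤ (N.cap u v).toReal := fun u hu v hv =>
    (ENNReal.ofReal_le_iff_le_toReal (hfin u hu v hv)).1 (hf.2.1 u v)
  have hcapReal : flowOut (fun u v => (N.cap u v).toReal) S ≤ netFlow N f := by
    rw [← toReal_flowOut hfin]
    exact ENNReal.toReal_le_of_le_ofReal hnet hcap
  have hsplit := hf.netFlow_eq_flowOut_sub hS
  intro u hu v hv hstep
  rcases hstep with hfwd | hbwd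
  · have hlt := flowOut_lt_flowOut hfc hu hv
      ((ENNReal.ofReal_lt_iff_lt_toReal (hf.1 u v) (hfin u hu v hv)).1 hfwd)
    linarith [flowOut_nonneg hf.1 Sᶜ]
  · have hpos : flowOut 0 Sᶜ < flowOut f Sᶜ :=
      flowOut_lt_flowOut (fun a _ b _ => hf.1 a b) (mem_compl.2 hv) (by simpa using hu) hbwd
    rw [show flowOut (0 : X → X → ℝ) Sᶜ = 0 by simp [flowOut]] at hpos
    linarith [flowOut_mono hfc]

lemma mem_reachCut [Fintype X] {w : X} :
    w ∈ reachCut N f ↔ Relation.ReflTransGen (AugStep N f) N.s w := by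
  simp [reachCut]

lemma not_augStep_of_mem_reachCut [Fintype X] {u v : X} (hu : u ∈ reachCut N f)
    (hv : v ∉ reachCut N f) : ¬ AugStep N f u v :=
  fun hstep => hv (mem_reachCut.2 ((mem_reachCut.1 hu).tail hstep))

lemma reachCut_subset [Fintype X] {S : Finset X} (hs : N.s ∈ S)
    (hclosed : ∀ u ∈ S, ∀ v ∉ S, ¬ AugStep N f u v) : reachCut N f ⊆ S := by
  simp only [Finset.subset_iff, mem_reachCut]
  intro w hw
  induction hw with
  | refl => exact hs
  | tail _ hstep ih => exact by_contra fun hc => hclosed _ ih _ hc hstep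

end Network

/-- for a max-flow `f`, `S_c` is contained in every min-cut; consequently
`S_c` is the unique smallest min-cut with respect to set inclusion. -/
theorem reachCut_smallest_minCut (N : FlowNetwork V) (f : V → V → ℝ)
    (hf : IsMaxFlow N f) (hfin : ∃ S, IsCut N S ∧ cutCap N S ≠ ⊤) :
    (∀ S, IsMinCut N S → reachCut N f ⊆ S) ∧
    IsMinCut N (reachCut N f) ∧
    ∀ T, IsMinCut N T → (∀ S, IsMinCut N S → T ⊆ S) → T = reachCut N f := by
  obtain ⟨S₀, hS₀, -⟩ := hfin
  have hst : N.s ≠ N.t := fun h => hS₀.2 (h ▸ hS₀.1)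
  have hcut : IsCut N (reachCut N f) :=
    ⟨mem_reachCut.2 .refl, fun ht => hf.not_reflTransGen_augStep hst (mem_reachCut.1 ht)⟩
  have htight : cutCap N (reachCut N f) = ENNReal.ofReal (netFlow N f) :=
    hf.1.cutCap_eq_ofReal_netFlow hcut fun _ hu _ hv => not_augStep_of_mem_reachCut hu hv
  have hmin : IsMinCut N (reachCut N f) :=
    ⟨hcut, fun T hT => htight ▸ hf.1.ofReal_netFlow_le_cutCap hT⟩
  have hsub (S : Finset V) (hS : IsMinCut N S) : reachCut N f ⊆ S :=
    reachCut_subset hS.1.1 <| hf.1.not_augStep_of_cutCap_le hS.1 hf.netFlow_nonneg <|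
      htight ▸ hS.2 _ hcut
  exact ⟨hsub, hmin, fun T hT hTmin => (hTmin _ hmin).antisymm (hsub T hT)⟩
end

section
/- In a flow network where the capacity of every edge leaving a given cut S is finite and every edge crossing out of a min-cut is saturated while every edge crossing into a min-cut carries zero flow (under a fixed max-flow f*), the following holds: if S_c is the set of vertices reachable from the source by f*-augmenting paths (together with the source), then h(S_c) is a minimum cost A–Y separator in H and for every other minimum cost A–Y separator Z one has h(S_c) ⊴ Z (where ⊴ is the separation preorder: Y is separated from Z∖h(S_c) by h(S_c) and A is separated from h(S_c)∖Z by Z). -/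
open Finset
open scoped ENNReal

variable {V : Type} [Fintype V] [DecidableEq V]

/-- `Z` is an `A`–`Y` separator in `H`: disjoint from `{A, Y}` and
intersecting (the support of) every path between `A` and `Y`. -/
def IsSeparator (H : SimpleGraph V) (A Y : V) (Z : Finset V) : Prop :=
  A ∉ Z ∧ Y ∉ Z ∧ ∀ p : H.Walk A Y, ∃ w ∈ p.support, w ∈ Z

/-- The cost of a set of vertices. -/
noncomputable def sepCost (c : V → ℝ≥0∞) (Z : Finset V) : ℝ≥0∞ := ∑ w ∈ Z, c w

/-- A minimal separator: no proper subset is a separator. -/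
def IsMinimalSeparator (H : SimpleGraph V) (A Y : V) (Z : Finset V) : Prop :=
  IsSeparator H A Y Z ∧ ∀ Z' ⊂ Z, ¬ IsSeparator H A Y Z'

/-- A minimum cost separator. -/
def IsMinCostSeparator (H : SimpleGraph V) (A Y : V) (c : V → ℝ≥0∞) (Z : Finset V) : Prop :=
  IsSeparator H A Y Z ∧ ∀ Z', IsSeparator H A Y Z' → sepCost c Z ≤ sepCost c Z'

/-- The capacity function of the vertex-splitting flow network `D` associated with `H`:
each vertex `W` is split into `W' = Sum.inl W` and `W'' = Sum.inr W`, with an internal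
edge `W' → W''` of capacity `c W` (infinite when `W ∈ {A, Y}`), and for each undirected
edge `U − W` of `H`, infinite-capacity external edges `U'' → W'` and `W'' → U'`.
Capacity `0` means "no edge".  The source is `Y'' = Sum.inr Y`, the sink `A' = Sum.inl A`. -/
noncomputable def splitCap (H : SimpleGraph V) [DecidableRel H.Adj] (c : V → ℝ≥0∞) (A Y : V) :
    V ⊕ V → V ⊕ V → ℝ≥0∞
  | Sum.inl W, Sum.inr X => if W = X then (if W = A ∨ W = Y then ⊤ else c W) else 0
  | Sum.inr U, Sum.inl W => if H.Adj U W then ⊤ else 0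
  | _, _ => 0

/-- A cut in `D`: contains the source `Y''` and not the sink `A'`. -/
def IsCutD (A Y : V) (S : Finset (V ⊕ V)) : Prop :=
  Sum.inr Y ∈ S ∧ Sum.inl A ∉ S

/-- The capacity of a cut in `D`. -/
noncomputable def cutCapD (cap : V ⊕ V → V ⊕ V → ℝ≥0∞) (S : Finset (V ⊕ V)) : ℝ≥0∞ :=
  ∑ u ∈ S, ∑ v ∈ Sᶜ, cap u v

/-- A min-cut in `D`. -/
def IsMinCutD (A Y : V) (cap : V ⊕ V → V ⊕ V → ℝ≥0∞) (S : Finset (V ⊕ V)) : Prop :=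
  IsCutD A Y S ∧ ∀ T, IsCutD A Y T → cutCapD cap S ≤ cutCapD cap T

/-- `p` is a directed path from `a` to `b` in the directed graph whose edges are the
pairs of positive capacity. -/
def IsDiPath {α : Type} (cap : α → α → ℝ≥0∞) (p : List α) (a b : α) : Prop :=
  p.Chain' (fun u v => cap u v ≠ 0) ∧ p.head? = some a ∧ p.getLast? = some b

/-- The map `𝔡`: the set formed by `Y''` and all vertices of `D` lying on some directed
path from `Y''` to `W'` for some `W ∈ Z` that does not intersect `U'` or `U''` for any
other `U ∈ Z`. -/
noncomputable def dMap (H : SimpleGraph V) [DecidableRel H.Adj] (c : V → ℝ≥0∞) (A Y : V)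
    (Z : Finset V) : Finset (V ⊕ V) :=
  @Finset.filter (V ⊕ V)
    (fun x => x = Sum.inr Y ∨
      ∃ W ∈ Z, ∃ p : List (V ⊕ V), IsDiPath (splitCap H c A Y) p (Sum.inr Y) (Sum.inl W) ∧
        x ∈ p ∧ ∀ U ∈ Z, U ≠ W → Sum.inl U ∉ p ∧ Sum.inr U ∉ p)
    (fun _ => Classical.propDecidable _) Finset.univ

/-- The map `𝔥`: the set of vertices `W` of `H` whose internal edge `(W', W'')`
crosses from `S` to its complement. -/
def hMap (S : Finset (V ⊕ V)) : Finset V :=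
  Finset.univ.filter (fun W => Sum.inl W ∈ S ∧ Sum.inr W ∉ S)

/-- The relation `Z₁ ⊴ Z₂`: `Y` is separated from `Z₂ \ Z₁` by `Z₁`, and
`A` is separated from `Z₁ \ Z₂` by `Z₂`, in `H`. -/
def SepOrder (H : SimpleGraph V) (A Y : V) (Z₁ Z₂ : Finset V) : Prop :=
  (∀ W ∈ Z₂ \ Z₁, ∀ p : H.Walk Y W, ∃ u ∈ p.support, u ∈ Z₁) ∧
  (∀ W ∈ Z₁ \ Z₂, ∀ p : H.Walk A W, ∃ u ∈ p.support, u ∈ Z₂)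

/-- `f` is a flow on the network with capacity `cap`, source `s`, sink `t`. -/
def IsFlowD {α : Type} [Fintype α] (cap : α → α → ℝ≥0∞) (s t : α) (f : α → α → ℝ) : Prop :=
  (∀ u v, 0 ≤ f u v) ∧
  (∀ u v, ENNReal.ofReal (f u v) ≤ cap u v) ∧
  (∀ w, w ≠ s → w ≠ t → ∑ u, f u w = ∑ u, f w u)

/-- The total (net) flow into the sink. -/
def netFlowD {α : Type} [Fintype α] (t : α) (f : α → α → ℝ) : ℝ :=
  ∑ u, f u t - ∑ u, f t u

/-- A max-flow. -/
def IsMaxFlowD {α : Type} [Fintype α] (cap : α → α → ℝ≥0∞) (s t : α)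
    (f : α → α → ℝ) : Prop :=
  IsFlowD cap s t f ∧ ∀ g, IsFlowD cap s t g → netFlowD t g ≤ netFlowD t f

/-- One step of an augmenting path for `f`. -/
def AugStepD {α : Type} (cap : α → α → ℝ≥0∞) (f : α → α → ℝ) (u v : α) : Prop :=
  ENNReal.ofReal (f u v) < cap u v ∨ 0 < f v u

open scoped Classical in
/-- The set `S_c` of the source together with all vertices reachable from the source
by `f`-augmenting paths. -/
noncomputable def reachCutD {α : Type} [Fintype α] (cap : α → α → ℝ≥0∞)
    (f : α → α → ℝ) (s : α) : Finset α :=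
  Finset.univ.filter (fun W => Relation.ReflTransGen (AugStepD cap f) s W)

/-!
An augmenting step can never leave a cut whose outgoing edges are saturated and whose incoming
edges carry no flow, so `S_c` lies inside every min-cut; `S_c` is itself such a cut, hence its
capacity is the flow value and it is the inclusion-minimum min-cut. Since external edges have
infinite capacity, a walk in `H` from `Y` can leave a finite-capacity cut `S` only across an
internal edge, so `𝔥(S)` is a separator of cost at most the capacity of `S`. Conversely a
separator `Z` gives a cut of capacity at most the cost of `Z`. Comparing costs, `𝔥(S_c)` is a
minimum cost separator and the cut of every minimum cost separator `Z` is a min-cut, so it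
contains `S_c`; this inclusion is what `𝔥(S_c) ⊴ Z` amounts to.
-/

set_option linter.unusedSectionVars false

section Flow

variable {α : Type} [Fintype α] [DecidableEq α] {cap : α → α → ℝ≥0∞} {f : α → α → ℝ}
  {s t : α} {S : Finset α}

def IsSaturatedCut (cap : α → α → ℝ≥0∞) (f : α → α → ℝ) (S : Finset α) : Prop :=
  (∀ u ∈ S, ∀ v ∈ Sᶜ, ENNReal.ofReal (f u v) = cap u v) ∧ (∀ u ∈ Sᶜ, ∀ v ∈ S, f u v = 0)

theorem IsFlowD.netFlowD_eq_out_sub_in (hf : IsFlowD cap s t f) (hs : s ∈ S) (ht : t ∉ S) :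
    netFlowD t f = ∑ u ∈ S, ∑ v ∈ Sᶜ, f u v - ∑ u ∈ S, ∑ v ∈ Sᶜ, f v u := by
  have hcons : ∑ w ∈ Sᶜ, (∑ u, f u w - ∑ u, f w u) = netFlowD t f :=
    sum_eq_single_of_mem t (mem_compl.2 ht) fun w hw hwt => by
      rw [hf.2.2 w (ne_of_mem_of_not_mem hs (mem_compl.1 hw)).symm hwt, sub_self]
  have hsplit (g : α → α → ℝ) :
      ∑ w ∈ Sᶜ, ∑ u, g u w = ∑ u ∈ S, ∑ w ∈ Sᶜ, g u w + ∑ w ∈ Sᶜ, ∑ u ∈ Sᶜ, g u w := by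
    rw [sum_comm (s := S), ← sum_add_distrib]
    exact sum_congr rfl fun w _ => (sum_add_sum_compl S _).symm
  have hinner : ∑ w ∈ Sᶜ, ∑ u ∈ Sᶜ, f u w = ∑ w ∈ Sᶜ, ∑ u ∈ Sᶜ, f w u := sum_comm
  rw [← hcons, sum_sub_distrib, hsplit f, hsplit fun u w => f w u, hinner]
  ring

theorem IsSaturatedCut.cutCap_eq_netFlowD (hS : IsSaturatedCut cap f S)
    (hf : IsFlowD cap s t f) (hs : s ∈ S) (ht : t ∉ S) :
    ∑ u ∈ S, ∑ v ∈ Sᶜ, cap u v = ENNReal.ofReal (netFlowD t f) := by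
  have hin : ∑ u ∈ S, ∑ v ∈ Sᶜ, f v u = 0 :=
    sum_eq_zero fun u hu => sum_eq_zero fun v hv => hS.2 v hv u hu
  rw [hf.netFlowD_eq_out_sub_in hs ht, hin, sub_zero,
    ENNReal.ofReal_sum_of_nonneg fun u _ => sum_nonneg fun v _ => hf.1 u v]
  refine sum_congr rfl fun u hu => ?_
  rw [ENNReal.ofReal_sum_of_nonneg fun v _ => hf.1 u v]
  exact sum_congr rfl fun v hv => (hS.1 u hu v hv).symm

theorem mem_reachCutD {u : α} :
    u ∈ reachCutD cap f s ↔ Relation.ReflTransGen (AugStepD cap f) s u := by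
  simp [reachCutD]

theorem source_mem_reachCutD : s ∈ reachCutD cap f s :=
  mem_reachCutD.2 Relation.ReflTransGen.refl

theorem IsFlowD.isSaturatedCut_reachCutD (hf : IsFlowD cap s t f) :
    IsSaturatedCut cap f (reachCutD cap f s) := by
  have hstuck {u v : α} (hu : u ∈ reachCutD cap f s) (hv : v ∉ reachCutD cap f s) :
      ¬ AugStepD cap f u v := fun h => hv (mem_reachCutD.2 ((mem_reachCutD.1 hu).tail h))
  constructor
  · intro u hu v hv
    exact le_antisymm (hf.2.1 u v) (not_lt.1 fun h => hstuck hu (mem_compl.1 hv) (Or.inl h))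
  · intro u hu v hv
    exact le_antisymm (not_lt.1 fun h => hstuck hv (mem_compl.1 hu) (Or.inr h)) (hf.1 u v)

theorem IsSaturatedCut.reachCutD_subset (hS : IsSaturatedCut cap f S) (hs : s ∈ S) :
    reachCutD cap f s ⊆ S := by
  intro u hu
  induction mem_reachCutD.1 hu with
  | refl => exact hs
  | @tail b v hb hstep ih =>
    have hbS : b ∈ S := ih (mem_reachCutD.2 hb)
    by_contra hvS
    rcases hstep with hlt | hpos
    · exact (hS.1 b hbS v (mem_compl.2 hvS)).not_lt hlt
    · exact (hS.2 v (mem_compl.2 hvS) b hbS).not_gt hpos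

end Flow

section Network

variable {H : SimpleGraph V} [DecidableRel H.Adj] {A Y : V} {c : V → ℝ≥0∞}
  {cap : V ⊕ V → V ⊕ V → ℝ≥0∞} {S : Finset (V ⊕ V)}

theorem exists_isMinCutD (A Y : V) (cap : V ⊕ V → V ⊕ V → ℝ≥0∞) : ∃ M, IsMinCutD A Y cap M := by
  classical
  obtain ⟨M, hM, hmin⟩ := exists_min_image (univ.filter (IsCutD A Y)) (cutCapD cap)
    ⟨{Sum.inr Y}, mem_filter.2 ⟨mem_univ _, mem_singleton_self _, by simp⟩⟩
  exact ⟨M, (mem_filter.1 hM).2, fun T hT => hmin T (mem_filter.2 ⟨mem_univ _, hT⟩)⟩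

theorem isMinCutD_reachCutD {f : V ⊕ V → V ⊕ V → ℝ}
    (hf : IsFlowD cap (Sum.inr Y) (Sum.inl A) f)
    (hsat : ∀ M, IsMinCutD A Y cap M → IsSaturatedCut cap f M) :
    IsMinCutD A Y cap (reachCutD cap f (Sum.inr Y)) := by
  obtain ⟨M, hM⟩ := exists_isMinCutD A Y cap
  have hcut : IsCutD A Y (reachCutD cap f (Sum.inr Y)) :=
    ⟨source_mem_reachCutD, fun h => hM.1.2 ((hsat M hM).reachCutD_subset hM.1.1 h)⟩
  refine ⟨hcut, fun T hT => ?_⟩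
  calc cutCapD cap (reachCutD cap f (Sum.inr Y))
      = ENNReal.ofReal (netFlowD (Sum.inl A) f) :=
        hf.isSaturatedCut_reachCutD.cutCap_eq_netFlowD hf hcut.1 hcut.2
    _ = cutCapD cap M := ((hsat M hM).cutCap_eq_netFlowD hf hM.1.1 hM.1.2).symm
    _ ≤ cutCapD cap T := hM.2 T hT

theorem le_cutCapD {u v : V ⊕ V} (hu : u ∈ S) (hv : v ∉ S) : cap u v ≤ cutCapD cap S :=
  (single_le_sum (fun _ _ => zero_le) (mem_compl.2 hv)).trans
    (single_le_sum (f := fun x => ∑ w ∈ Sᶜ, cap x w) (fun _ _ => zero_le) hu)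

theorem sum_internal_le_cutCapD {T : Finset V}
    (hT : ∀ w ∈ T, Sum.inl w ∈ S ∧ Sum.inr w ∉ S) :
    ∑ w ∈ T, cap (Sum.inl w) (Sum.inr w) ≤ cutCapD cap S := by
  rw [cutCapD, ← sum_product', ← sum_image (f := fun e => cap e.1 e.2)
    (g := fun w => (Sum.inl w, Sum.inr w)) fun _ _ _ _ h => Sum.inl_injective (Prod.ext_iff.1 h).1]
  refine sum_le_sum_of_subset fun e he => ?_
  obtain ⟨w, hw, rfl⟩ := mem_image.1 he
  exact mem_product.2 ⟨(hT w hw).1, mem_compl.2 (hT w hw).2⟩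

theorem cutCapD_le_sum_internal {T : Finset V}
    (hT : ∀ u ∈ S, ∀ v ∉ S, cap u v ≠ 0 → ∃ w ∈ T, u = Sum.inl w ∧ v = Sum.inr w) :
    cutCapD cap S ≤ ∑ w ∈ T, cap (Sum.inl w) (Sum.inr w) := by
  rw [cutCapD, ← sum_product', ← sum_image (f := fun e => cap e.1 e.2)
    (g := fun w => (Sum.inl w, Sum.inr w)) fun _ _ _ _ h => Sum.inl_injective (Prod.ext_iff.1 h).1]
  refine sum_le_sum_of_ne_zero fun e he hne => ?_
  obtain ⟨hu, hv⟩ := mem_product.1 he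
  obtain ⟨w, hw, hwu, hwv⟩ := hT e.1 hu e.2 (mem_compl.1 hv) hne
  exact mem_image.2 ⟨w, hw, Prod.ext_iff.2 ⟨hwu.symm, hwv.symm⟩⟩

theorem splitCap_inl_inr_self (w : V) : splitCap H c A Y (Sum.inl w) (Sum.inr w) =
    if w = A ∨ w = Y then ⊤ else c w := by
  simp [splitCap]

theorem mem_hMap {w : V} : w ∈ hMap S ↔ Sum.inl w ∈ S ∧ Sum.inr w ∉ S := by
  simp [hMap]

theorem sepCost_hMap_le_cutCapD (S : Finset (V ⊕ V)) :
    sepCost c (hMap S) ≤ cutCapD (splitCap H c A Y) S := by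
  refine (sum_le_sum fun w _ => ?_).trans (sum_internal_le_cutCapD fun w hw => mem_hMap.1 hw)
  rw [splitCap_inl_inr_self]
  split_ifs
  exacts [le_top, le_rfl]

theorem inl_mem_of_adj (hS : cutCapD (splitCap H c A Y) S ≠ ⊤) {u w : V}
    (hu : Sum.inr u ∈ S) (h : H.Adj u w) : Sum.inl w ∈ S := by
  by_contra hw
  refine hS (top_unique ?_)
  simpa [splitCap, h] using le_cutCapD (cap := splitCap H c A Y) hu hw

theorem inr_mem_of_walk_avoiding_hMap (hS : cutCapD (splitCap H c A Y) S ≠ ⊤) {x y : V}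
    (p : H.Walk x y) (hx : Sum.inr x ∈ S) (hp : ∀ w ∈ p.support, w ∉ hMap S) :
    Sum.inr y ∈ S ∧ (x = y ∨ Sum.inl y ∈ S) := by
  induction p with
  | nil => exact ⟨hx, Or.inl rfl⟩
  | @cons a b y h q ih =>
    have hb : Sum.inl b ∈ S := inl_mem_of_adj hS hx h
    have hb' : Sum.inr b ∈ S := by
      by_contra hb'
      exact hp b (by simp) (mem_hMap.2 ⟨hb, hb'⟩)
    obtain ⟨hy, rfl | hy'⟩ := ih hb' fun w hw => hp w (by simp [hw])
    exacts [⟨hy, Or.inr hb⟩, ⟨hy, Or.inr hy'⟩]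

theorem ne_of_isSeparator {Z : Finset V} (hZ : IsSeparator H A Y Z) : A ≠ Y := by
  rintro rfl
  obtain ⟨w, hw, hwZ⟩ := hZ.2.2 .nil
  rw [SimpleGraph.Walk.support_nil, List.mem_singleton] at hw
  exact hZ.1 (hw ▸ hwZ)

theorem isSeparator_hMap (hAY : A ≠ Y) (hS : IsCutD A Y S)
    (hfin : cutCapD (splitCap H c A Y) S ≠ ⊤) : IsSeparator H A Y (hMap S) := by
  refine ⟨fun h => hS.2 (mem_hMap.1 h).1, fun h => (mem_hMap.1 h).2 hS.1, fun p => ?_⟩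
  by_contra! hp
  obtain ⟨-, hYA | hA⟩ :=
    inr_mem_of_walk_avoiding_hMap hfin p.reverse hS.1 (by simpa using hp)
  exacts [hAY hYA.symm, hS.2 hA]

open scoped Classical in
noncomputable def avoidingReach (H : SimpleGraph V) (Y : V) (Z : Finset V) : Finset V :=
  univ.filter fun u => ∃ p : H.Walk Y u, ∀ v ∈ p.support, v ∉ Z

/-- The cut standing for `𝔡(Z)`: both copies of the vertices reachable from `Y` off `Z`,
and the entry copies `W'` of `W ∈ Z`. -/
noncomputable def sepCut (H : SimpleGraph V) (Y : V) (Z : Finset V) : Finset (V ⊕ V) :=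
  (avoidingReach H Y Z ∪ Z).disjSum (avoidingReach H Y Z)

theorem mem_avoidingReach {Z : Finset V} {u : V} :
    u ∈ avoidingReach H Y Z ↔ ∃ p : H.Walk Y u, ∀ v ∈ p.support, v ∉ Z := by
  simp [avoidingReach]

theorem not_mem_of_mem_avoidingReach {Z : Finset V} {u : V} (hu : u ∈ avoidingReach H Y Z) :
    u ∉ Z := by
  obtain ⟨p, hp⟩ := mem_avoidingReach.1 hu
  exact hp u p.end_mem_support

theorem inl_mem_sepCut {Z : Finset V} {u : V} :
    Sum.inl u ∈ sepCut H Y Z ↔ u ∈ avoidingReach H Y Z ∨ u ∈ Z := by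
  rw [sepCut, inl_mem_disjSum, mem_union]

theorem inr_mem_sepCut {Z : Finset V} {u : V} :
    Sum.inr u ∈ sepCut H Y Z ↔ u ∈ avoidingReach H Y Z :=
  inr_mem_disjSum

theorem mem_avoidingReach_or_mem_of_adj {Z : Finset V} {u w : V}
    (hu : u ∈ avoidingReach H Y Z) (h : H.Adj u w) : w ∈ avoidingReach H Y Z ∨ w ∈ Z := by
  by_contra hw
  rw [not_or] at hw
  obtain ⟨p, hp⟩ := mem_avoidingReach.1 hu
  refine hw.1 (mem_avoidingReach.2 ⟨p.concat h, fun v hv => ?_⟩)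
  rw [SimpleGraph.Walk.support_concat, List.mem_append, List.mem_singleton] at hv
  rcases hv with hv | rfl
  exacts [hp v hv, hw.2]

theorem isCutD_sepCut {Z : Finset V} (hZ : IsSeparator H A Y Z) : IsCutD A Y (sepCut H Y Z) := by
  refine ⟨inr_mem_sepCut.2 (mem_avoidingReach.2 ⟨.nil, by simpa using hZ.2.1⟩), fun hA => ?_⟩
  rcases inl_mem_sepCut.1 hA with hA | hA
  · obtain ⟨p, hp⟩ := mem_avoidingReach.1 hA
    obtain ⟨w, hw, hwZ⟩ := hZ.2.2 p.reverse
    exact hp w (by simpa using hw) hwZ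
  · exact hZ.1 hA

theorem cutCapD_sepCut_le {Z : Finset V} (hZ : IsSeparator H A Y Z) :
    cutCapD (splitCap H c A Y) (sepCut H Y Z) ≤ sepCost c Z := by
  have hcross : ∀ u ∈ sepCut H Y Z, ∀ v ∉ sepCut H Y Z, splitCap H c A Y u v ≠ 0 →
      ∃ w ∈ Z, u = Sum.inl w ∧ v = Sum.inr w := by
    rintro (w | w) hu (x | x) hv hne
    · simp [splitCap] at hne
    · obtain rfl : w = x := by_contra fun hwx => hne (by simp [splitCap, hwx])
      exact ⟨w, (inl_mem_sepCut.1 hu).resolve_left (mt inr_mem_sepCut.2 hv), rfl, rfl⟩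
    · have hadj : H.Adj w x := by_contra fun h => hne (by simp [splitCap, h])
      exact absurd (inl_mem_sepCut.2
        (mem_avoidingReach_or_mem_of_adj (inr_mem_sepCut.1 hu) hadj)) hv
    · simp [splitCap] at hne
  refine (cutCapD_le_sum_internal hcross).trans (le_of_eq (sum_congr rfl fun w hw => ?_))
  have hwA : w ≠ A := fun h => hZ.1 (h ▸ hw)
  have hwY : w ≠ Y := fun h => hZ.2.1 (h ▸ hw)
  simp [splitCap_inl_inr_self, hwA, hwY]

/-- The paper's `S ⊆ S' → 𝔥(S) ⊴ 𝔥(S')` for `S' = sepCut H Y Z`, whose `𝔥` is `Z`. -/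
theorem sepOrder_hMap_of_subset_sepCut (hY : Sum.inr Y ∈ S)
    (hfin : cutCapD (splitCap H c A Y) S ≠ ⊤) {Z : Finset V} (hZ : IsSeparator H A Y Z)
    (hsub : S ⊆ sepCut H Y Z) : SepOrder H A Y (hMap S) Z := by
  constructor
  · intro W hW p
    by_contra! hp
    have hW' := inr_mem_sepCut.1 (hsub (inr_mem_of_walk_avoiding_hMap hfin p hY hp).1)
    exact not_mem_of_mem_avoidingReach hW' (mem_sdiff.1 hW).1
  · intro W hW p
    obtain ⟨hWS, hWZ⟩ := mem_sdiff.1 hW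
    have hW' := (inl_mem_sepCut.1 (hsub (mem_hMap.1 hWS).1)).resolve_right hWZ
    obtain ⟨q, hq⟩ := mem_avoidingReach.1 hW'
    obtain ⟨u, hu, huZ⟩ := hZ.2.2 (p.append q.reverse)
    rw [SimpleGraph.Walk.mem_support_append_iff, SimpleGraph.Walk.support_reverse,
      List.mem_reverse] at hu
    exact ⟨u, hu.resolve_right fun hu => hq u hu huZ, huZ⟩

end Network

theorem hMap_reachCut_optimal_general (H : SimpleGraph V) [DecidableRel H.Adj]
    (A Y : V) (c : V → ℝ≥0∞)
    (hsep : ∃ Z, IsSeparator H A Y Z)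
    (f : V ⊕ V → V ⊕ V → ℝ)
    (hf : IsMaxFlowD (splitCap H c A Y) (Sum.inr Y) (Sum.inl A) f)
    (hsat : ∀ S, IsMinCutD A Y (splitCap H c A Y) S →
      (∀ u ∈ S, ∀ v ∈ Sᶜ, ENNReal.ofReal (f u v) = splitCap H c A Y u v) ∧
      (∀ u ∈ Sᶜ, ∀ v ∈ S, f u v = 0)) :
    IsMinCostSeparator H A Y c
      (hMap (reachCutD (splitCap H c A Y) f (Sum.inr Y))) ∧
    ∀ Z, IsMinCostSeparator H A Y c Z →
      SepOrder H A Y (hMap (reachCutD (splitCap H c A Y) f (Sum.inr Y))) Z := by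
  set cap := splitCap H c A Y
  set Sc := reachCutD cap f (Sum.inr Y)
  obtain ⟨Z₀, hZ₀⟩ := hsep
  have hSc : IsMinCutD A Y cap Sc := isMinCutD_reachCutD hf.1 hsat
  have hfin : cutCapD cap Sc ≠ ⊤ := by
    rw [cutCapD, hf.1.isSaturatedCut_reachCutD.cutCap_eq_netFlowD hf.1 hSc.1.1 hSc.1.2]
    exact ENNReal.ofReal_ne_top
  have hmin : IsMinCostSeparator H A Y c (hMap Sc) :=
    ⟨isSeparator_hMap (ne_of_isSeparator hZ₀) hSc.1 hfin, fun Z hZ =>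
      (sepCost_hMap_le_cutCapD Sc).trans <|
        (hSc.2 _ (isCutD_sepCut hZ)).trans (cutCapD_sepCut_le hZ)⟩
  refine ⟨hmin, fun Z hZ => sepOrder_hMap_of_subset_sepCut hSc.1.1 hfin hZ.1 ?_⟩
  have hZcut : IsMinCutD A Y cap (sepCut H Y Z) := by
    refine ⟨isCutD_sepCut hZ.1, fun T hT => ?_⟩
    calc cutCapD cap (sepCut H Y Z) ≤ sepCost c Z := cutCapD_sepCut_le hZ.1
      _ ≤ sepCost c (hMap Sc) := hZ.2 _ hmin.1
      _ ≤ cutCapD cap Sc := sepCost_hMap_le_cutCapD Sc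
      _ ≤ cutCapD cap T := hSc.2 T hT
  exact IsSaturatedCut.reachCutD_subset (hsat _ hZcut) hZcut.1.1

/-- for the vertex-splitting network `D` of `H` with a max-flow `f`
(assuming some finite-capacity cut exists and that under `f` every edge crossing out of
a min-cut is saturated while every edge crossing into a min-cut carries zero flow),
`𝔥(S_c)` is a minimum cost `A`–`Y` separator and `𝔥(S_c) ⊴ Z` for every other minimum
cost `A`–`Y` separator `Z`. -/
theorem hMap_reachCut_optimal (H : SimpleGraph V) [DecidableRel H.Adj]
    (A Y : V) (c : V → ℝ≥0∞) (hcpos : ∀ w, 0 < c w) (hcfin : ∀ w, c w ≠ ⊤)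
    (hsep : ∃ Z, IsSeparator H A Y Z)
    (f : V ⊕ V → V ⊕ V → ℝ)
    (hf : IsMaxFlowD (splitCap H c A Y) (Sum.inr Y) (Sum.inl A) f)
    (hfin : ∃ S, IsCutD A Y S ∧ cutCapD (splitCap H c A Y) S ≠ ⊤)
    (hsat : ∀ S, IsMinCutD A Y (splitCap H c A Y) S →
      (∀ u ∈ S, ∀ v ∈ Sᶜ, ENNReal.ofReal (f u v) = splitCap H c A Y u v) ∧
      (∀ u ∈ Sᶜ, ∀ v ∈ S, f u v = 0)) :
    IsMinCostSeparator H A Y c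
      (hMap (reachCutD (splitCap H c A Y) f (Sum.inr Y))) ∧
    ∀ Z, IsMinCostSeparator H A Y c Z →
      SepOrder H A Y (hMap (reachCutD (splitCap H c A Y) f (Sum.inr Y))) Z :=
  hMap_reachCut_optimal_general H A Y c hsep f hf hsat
end
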